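/- Let a < b be real numbers, let μ be a finite signed Borel measure on (a,b), and let v : (a,b) → ℝ be a right-continuous function of bounded variation whose derivative measure is μ (i.e. v(y) − v(x) = μ((x,y]) for all a < x ≤ y < b). Let μ^- be the negative part of μ in the Jordan decomposition and let μ̃^- be its diffuse (non-atomic) part, i.e. μ^- restricted to the complement of its atoms. Then for μ̃^--a.e. x̄ ∈ (a,b) there exists δ > 0 such that v(x) > v(x̄) for all x ∈ (x̄ − δ, x̄) and v(x) < v(x̄) for all x ∈ (x̄, x̄ + δ). -/

import Mathlib

/-!
If `v` does not cross its value strictly downward at `x`, then there are points `y` arbitrarily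
close to `x` with `v (min x y) ≤ v (max x y)`, i.e. `n (Ι x y) ≤ p (Ι x y)`. Around a set `A` of
such points (and of non-atoms of `n`) the intervals `Ι x y` can be taken inside any open `U ⊇ A`;
countably many of them cover `A` up to a countable, hence `n`-null, set, and a finite irredundant
family of intervals covers each point at most twice. So `n A ≤ 2 * p U`, and by outer regularity
`n A ≤ 2 * p A`. As `p ⟂ₘ n`, `n`-almost every point lies in a `p`-null set, so `n A = 0`.
-/

open MeasureTheory Set Filter Topology Finset
open scoped ENNReal Classical Interval

theorem Set.OrdConnected.lt_iff_lt_of_mem_diff {α : Type*} [LinearOrder α] {I J : Set α}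
    (hI : I.OrdConnected) (hJ : J.OrdConnected) {t x y : α} (htI : t ∈ I) (htJ : t ∈ J)
    (hx : x ∈ I \ J) (hy : y ∈ J \ I) : x < t ↔ t < y := by
  have hxt : x ≠ t := by rintro rfl; exact hx.2 htJ
  have hyt : y ≠ t := by rintro rfl; exact hy.2 htI
  have below : ¬ (x < t ∧ y < t) := fun ⟨hxt, hyt⟩ => by
    rcases le_total x y with h | h
    · exact hy.2 (hI.out hx.1 htI ⟨h, hyt.le⟩)
    · exact hx.2 (hJ.out hy.1 htJ ⟨h, hxt.le⟩)
  have above : ¬ (t < x ∧ t < y) := fun ⟨htx, hty⟩ => by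
    rcases le_total x y with h | h
    · exact hx.2 (hJ.out htJ hy.1 ⟨htx.le, h⟩)
    · exact hy.2 (hI.out htI hx.1 ⟨hty.le, h⟩)
  grind

theorem card_filter_mem_le_two_of_ordConnected {α ι : Type*} [LinearOrder α] {F : Finset ι}
    {C : ι → Set α} (hC : ∀ i, (C i).OrdConnected)
    (hirr : ∀ i ∈ F, ¬ C i ⊆ ⋃ j ∈ F.erase i, C j) (t : α) : #{i ∈ F | t ∈ C i} ≤ 2 := by
  -- three intervals through `t`, each sticking out of the other two, would need three points
  -- pairwise on opposite sides of `t`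
  by_contra! h3
  obtain ⟨i, j, k, hi, hj, hk, hij, hik, hjk⟩ := Finset.two_lt_card_iff.mp h3
  simp only [Finset.mem_filter] at hi hj hk
  have escape {i j k : ι} (hi : i ∈ F) (hj : j ∈ F) (hk : k ∈ F) (hji : j ≠ i) (hki : k ≠ i) :
      ∃ x ∈ C i, x ∉ C j ∧ x ∉ C k := by
    by_contra! hcov
    refine hirr i hi fun x hx => ?_
    by_cases hxj : x ∈ C j
    · exact mem_biUnion (Finset.mem_erase.2 ⟨hji, hj⟩) hxj
    · exact mem_biUnion (Finset.mem_erase.2 ⟨hki, hk⟩) (hcov x hx hxj)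
  obtain ⟨x, hxi, hxj, hxk⟩ := escape hi.1 hj.1 hk.1 (Ne.symm hij) (Ne.symm hik)
  obtain ⟨y, hyj, hyi, hyk⟩ := escape hj.1 hi.1 hk.1 hij (Ne.symm hjk)
  obtain ⟨z, hzk, hzi, hzj⟩ := escape hk.1 hi.1 hj.1 hik hjk
  have hxy := (hC i).lt_iff_lt_of_mem_diff (hC j) hi.2 hj.2 ⟨hxi, hxj⟩ ⟨hyj, hyi⟩
  have hxz := (hC i).lt_iff_lt_of_mem_diff (hC k) hi.2 hk.2 ⟨hxi, hxk⟩ ⟨hzk, hzi⟩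
  have hyz := (hC j).lt_iff_lt_of_mem_diff (hC k) hj.2 hk.2 ⟨hyj, hyk⟩ ⟨hzk, hzj⟩
  have hyt : y ≠ t := by rintro rfl; exact hyi hi.2
  grind

theorem sum_measure_le_mul_measure_biUnion {α ι : Type*} [MeasurableSpace α] (μ : Measure α)
    {F : Finset ι} {C : ι → Set α} (hC : ∀ i, MeasurableSet (C i)) {k : ℕ}
    (hk : ∀ x, #{i ∈ F | x ∈ C i} ≤ k) :
    ∑ i ∈ F, μ (C i) ≤ k * μ (⋃ i ∈ F, C i) := by
  have hcount (x : α) : ∑ i ∈ F, (C i).indicator 1 x = (#{i ∈ F | x ∈ C i} : ℝ≥0∞) := by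
    simp [indicator_apply, Finset.sum_boole]
  calc ∑ i ∈ F, μ (C i) = ∫⁻ x, ∑ i ∈ F, (C i).indicator 1 x ∂μ := by
        rw [lintegral_finsetSum _ fun i _ => measurable_one.indicator (hC i)]
        simp only [lintegral_indicator_one (hC _)]
    _ ≤ ∫⁻ x, (⋃ i ∈ F, C i).indicator (fun _ => (k : ℝ≥0∞)) x ∂μ := by
        refine lintegral_mono fun x => ?_
        rw [hcount]
        by_cases hx : x ∈ ⋃ i ∈ F, C i
        · rw [indicator_of_mem hx]
          exact Nat.cast_le.2 (hk x)
        · have : #{i ∈ F | x ∈ C i} = 0 := by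
            simp only [Finset.card_eq_zero, Finset.filter_eq_empty_iff]
            exact fun i hi hxi => hx (mem_biUnion hi hxi)
          simp [this]
    _ ≤ k * μ (⋃ i ∈ F, C i) := lintegral_indicator_const_le _ _

section OrdConnected

variable {α ι : Type*} [LinearOrder α] [MeasurableSpace α] {μ ν : Measure α} {C : ι → Set α}

theorem measure_biUnion_finset_le_two_mul_of_ordConnected (F : Finset ι)
    (hconn : ∀ i, (C i).OrdConnected) (hmeas : ∀ i, MeasurableSet (C i))
    (hle : ∀ i, ν (C i) ≤ μ (C i)) : ν (⋃ i ∈ F, C i) ≤ 2 * μ (⋃ i ∈ F, C i) := by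
  induction F using Finset.strongInduction with
  | H F ih =>
  by_cases hred : ∃ i ∈ F, C i ⊆ ⋃ j ∈ F.erase i, C j
  · obtain ⟨i, hi, hsub⟩ := hred
    rw [← Finset.insert_erase hi, Finset.set_biUnion_insert, union_eq_right.2 hsub]
    exact ih _ (Finset.erase_ssubset hi)
  · push Not at hred
    calc ν (⋃ i ∈ F, C i) ≤ ∑ i ∈ F, ν (C i) := measure_biUnion_finset_le F C
      _ ≤ ∑ i ∈ F, μ (C i) := Finset.sum_le_sum fun i _ => hle i
      _ ≤ 2 * μ (⋃ i ∈ F, C i) := by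
        exact_mod_cast sum_measure_le_mul_measure_biUnion μ hmeas
          (card_filter_mem_le_two_of_ordConnected hconn hred)

theorem measure_iUnion_le_two_mul_of_ordConnected [Countable ι]
    (hconn : ∀ i, (C i).OrdConnected) (hmeas : ∀ i, MeasurableSet (C i))
    (hle : ∀ i, ν (C i) ≤ μ (C i)) : ν (⋃ i, C i) ≤ 2 * μ (⋃ i, C i) := by
  have hdir : Directed (· ⊆ ·) fun F : Finset ι => ⋃ i ∈ F, C i :=
    Monotone.directed_le fun F G hFG => biUnion_subset_biUnion_left hFG
  rw [iUnion_eq_iUnion_finset C, hdir.measure_iUnion]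
  refine iSup_le fun F => ?_
  calc ν (⋃ i ∈ F, C i) ≤ 2 * μ (⋃ i ∈ F, C i) :=
        measure_biUnion_finset_le_two_mul_of_ordConnected F hconn hmeas hle
    _ ≤ 2 * μ (⋃ G : Finset ι, ⋃ i ∈ G, C i) := by gcongr; exact subset_iUnion_of_subset F le_rfl

end OrdConnected

theorem exists_countable_diff_biUnion_uIoo_countable {α : Type*} [LinearOrder α]
    [TopologicalSpace α] [OrderTopology α] [SecondCountableTopology α] (A : Set α) (y : α → α)
    (hy : ∀ x ∈ A, y x ≠ x) :
    ∃ T ⊆ A, T.Countable ∧ (A \ ⋃ x ∈ T, uIoo x (y x)).Countable := by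
  obtain ⟨T, hTA, hTc, hTU⟩ := TopologicalSpace.isOpen_biUnion_countable A (fun x => uIoo x (y x))
    fun _ _ => isOpen_Ioo
  refine ⟨T, hTA, hTc, ?_⟩
  rw [hTU]
  set E := A \ ⋃ x ∈ A, uIoo x (y x)
  -- each point of `E` is isolated in `E` on the side where its interval lies
  refine (countable_setOfPred_isolated_left_within (s := E)).union
    (countable_setOfPred_isolated_right_within (s := E)) |>.mono fun x hx => ?_
  have hE : ∀ z ∈ E, z ∉ uIoo x (y x) := fun z hz hzx => hz.2 (mem_biUnion hx.1 hzx)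
  rcases (hy x hx.1).lt_or_gt with h | h
  · refine Or.inl ⟨hx, inf_principal_eq_bot.2 (mem_of_superset (Ioi_mem_nhds h) ?_)⟩
    exact fun z hz hzE => hE z hzE.1 (by rw [uIoo_of_gt h]; exact ⟨hz, hzE.2⟩)
  · refine Or.inr ⟨hx, inf_principal_eq_bot.2 (mem_of_superset (Iio_mem_nhds h) ?_)⟩
    exact fun z hz hzE => hE z hzE.1 (by rw [uIoo_of_lt h]; exact ⟨hzE.2, hz⟩)

theorem measure_le_two_mul_of_frequently_uIoc_le (μ ν : Measure ℝ) [μ.OuterRegular] {A : Set ℝ}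
    (hatom : ∀ x ∈ A, ν {x} = 0) (hfreq : ∀ x ∈ A, ∃ᶠ y in 𝓝[≠] x, ν (Ι x y) ≤ μ (Ι x y)) :
    ν A ≤ 2 * μ A := by
  suffices h : ∀ U, A ⊆ U → IsOpen U → ν A ≤ 2 * μ U by
    simpa only [A.measure_eq_iInf_isOpen μ, ENNReal.mul_iInf_of_ne two_ne_zero ENNReal.ofNat_ne_top,
      le_iInf_iff] using h
  intro U hAU hU
  have hsmall : ∀ x ∈ A, ∃ y, y ≠ x ∧ Ι x y ⊆ U ∧ ν (Ι x y) ≤ μ (Ι x y) := by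
    intro x hx
    obtain ⟨ε, hε, hball⟩ := Metric.isOpen_iff.1 hU x (hAU hx)
    have hnear : ∀ᶠ y in 𝓝[≠] x, y ∈ Metric.ball x ε ∧ y ≠ x :=
      (eventually_nhdsWithin_of_eventually_nhds (Metric.ball_mem_nhds x hε)).and
        self_mem_nhdsWithin
    obtain ⟨y, hle, hyball, hyx⟩ := ((hfreq x hx).and_eventually hnear).exists
    have hconv : (Metric.ball x ε).OrdConnected := (convex_ball x ε).ordConnected
    have hsub : Ι x y ⊆ U :=
      uIoc_subset_uIcc.trans ((hconv.uIcc_subset (Metric.mem_ball_self hε) hyball).trans hball)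
    exact ⟨y, hyx, hsub, hle⟩
  choose! y hyx hyU hyle using hsmall
  obtain ⟨T, hTA, hTc, hEc⟩ := exists_countable_diff_biUnion_uIoo_countable A y hyx
  have := hTc.to_subtype
  have hcover : A ⊆ (⋃ x : T, Ι (x : ℝ) (y x)) ∪ (A \ ⋃ x ∈ T, uIoo x (y x)) := fun x hx => by
    by_cases h : x ∈ ⋃ x ∈ T, uIoo x (y x)
    · obtain ⟨z, hz, hxz⟩ := mem_iUnion₂.1 h
      exact Or.inl (mem_iUnion.2 ⟨⟨z, hz⟩, Ioo_subset_Ioc_self hxz⟩)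
    · exact Or.inr ⟨hx, h⟩
  have hE : ν (A \ ⋃ x ∈ T, uIoo x (y x)) = 0 :=
    (measure_null_iff_singleton hEc).2 fun x hx => hatom x hx.1
  calc ν A ≤ ν (⋃ x : T, Ι (x : ℝ) (y x)) := by
        simpa [hE] using (measure_mono (μ := ν) hcover).trans (measure_union_le _ _)
    _ ≤ 2 * μ (⋃ x : T, Ι (x : ℝ) (y x)) :=
        measure_iUnion_le_two_mul_of_ordConnected (fun _ => ordConnected_Ioc)
          (fun _ => measurableSet_Ioc) fun x => hyle x (hTA x.2)
    _ ≤ 2 * μ U := by gcongr; exact iUnion_subset fun x => hyU x (hTA x.2)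

theorem exists_pos_forall_lt_of_eventually_lt (v : ℝ → ℝ) {x : ℝ}
    (h : ∀ᶠ y in 𝓝[≠] x, v (max x y) < v (min x y)) :
    ∃ δ > (0 : ℝ), (∀ y ∈ Ioo (x - δ) x, v x < v y) ∧ (∀ y ∈ Ioo x (x + δ), v y < v x) := by
  obtain ⟨δ, hδ, hball⟩ := Metric.eventually_nhds_iff.1 (eventually_nhdsWithin_iff.1 h)
  refine ⟨δ, hδ, fun y hy => ?_, fun y hy => ?_⟩
  · have := hball (by rw [Real.dist_eq, abs_lt]; constructor <;> linarith [hy.1, hy.2]) hy.2.ne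
    rwa [max_eq_left hy.2.le, min_eq_right hy.2.le] at this
  · have := hball (by rw [Real.dist_eq, abs_lt]; constructor <;> linarith [hy.1, hy.2]) hy.1.ne'
    rwa [max_eq_right hy.1.le, min_eq_left hy.1.le] at this

theorem measurableSet_setOf_measure_singleton_eq_zero {α : Type*} [MeasurableSpace α]
    [MeasurableSingletonClass α] (μ : Measure α) [SFinite μ] :
    MeasurableSet {x | μ {x} = 0} := by
  have hatoms : {x : α | 0 < μ {x}}.Countable :=
    Measure.countable_meas_pos_of_disjoint_iUnion (fun x => measurableSet_singleton x)
      fun _ _ hxy => disjoint_singleton.2 hxy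
  simpa only [pos_iff_ne_zero, compl_ofPred, not_not] using hatoms.measurableSet.compl

theorem stmt14_general (a b : ℝ) (v : ℝ → ℝ)
    (p n : Measure ℝ) [IsFiniteMeasure p] [IsFiniteMeasure n]
    (hsing : p ⟂ₘ n)
    (hderiv : ∀ x y : ℝ, a < x → x ≤ y → y < b →
      v y - v x = (p (Set.Ioc x y)).toReal - (n (Set.Ioc x y)).toReal) :
    ∀ᵐ xb ∂((n.restrict {x | n {x} = 0}).restrict (Set.Ioo a b)),
      ∃ δ > (0:ℝ), (∀ x ∈ Set.Ioo (xb - δ) xb, v xb < v x) ∧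
        (∀ x ∈ Set.Ioo xb (xb + δ), v x < v xb) := by
  obtain ⟨S, -, hpS, hnS⟩ := hsing
  have hmeasure_le {x y : ℝ} (hx : x ∈ Ioo a b) (hy : y ∈ Ioo a b)
      (hv : v (min x y) ≤ v (max x y)) : n (Ι x y) ≤ p (Ι x y) := by
    have := hderiv _ _ (lt_min hx.1 hy.1) min_le_max (max_lt hx.2 hy.2)
    rw [uIoc]
    exact (ENNReal.toReal_le_toReal (measure_ne_top _ _) (measure_ne_top _ _)).1 (by linarith)
  set A := {x ∈ S ∩ Ioo a b | n {x} = 0 ∧ ¬ ∀ᶠ y in 𝓝[≠] x, v (max x y) < v (min x y)}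
  have hA : n A = 0 := by
    refine le_antisymm ((measure_le_two_mul_of_frequently_uIoc_le p n (fun x hx => hx.2.1)
      fun x hx => ?_).trans ?_) zero_le
    · have hI : ∀ᶠ y in 𝓝[≠] x, y ∈ Ioo a b :=
        eventually_nhdsWithin_of_eventually_nhds (Ioo_mem_nhds hx.1.2.1 hx.1.2.2)
      refine ((not_eventually.1 hx.2.2).and_eventually hI).mono fun y hy => ?_
      exact hmeasure_le hx.1.2 hy.2 (not_lt.1 hy.1)
    · rw [measure_mono_null (fun x hx => hx.1.1) hpS, mul_zero]
  rw [ae_restrict_iff' measurableSet_Ioo,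
    ae_restrict_iff' (measurableSet_setOf_measure_singleton_eq_zero n)]
  filter_upwards [measure_eq_zero_iff_ae_notMem.1 hA, mem_ae_iff.2 hnS] with x hxA hxS hxD hxI
  by_contra hP
  exact hxA ⟨⟨hxS, hxI⟩, hxD, fun h => hP (exists_pos_forall_lt_of_eventually_lt v h)⟩

/-- Let `v` be a right-continuous BV function on `(a,b)` with derivative
measure `μ = p − n` (Jordan decomposition). Then for a.e. point `x̄` with respect to the
diffuse part of the negative part `n` there is `δ > 0` with `v > v(x̄)` on `(x̄ − δ, x̄)`
and `v < v(x̄)` on `(x̄, x̄ + δ)`. -/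
theorem stmt14 (a b : ℝ) (hab : a < b) (v : ℝ → ℝ)
    (p n : Measure ℝ) [IsFiniteMeasure p] [IsFiniteMeasure n]
    (hsing : p ⟂ₘ n)
    (hderiv : ∀ x y : ℝ, a < x → x ≤ y → y < b →
      v y - v x = (p (Set.Ioc x y)).toReal - (n (Set.Ioc x y)).toReal) :
    ∀ᵐ xb ∂((n.restrict {x | n {x} = 0}).restrict (Set.Ioo a b)),
      ∃ δ > (0:ℝ), (∀ x ∈ Set.Ioo (xb - δ) xb, v xb < v x) ∧
        (∀ x ∈ Set.Ioo xb (xb + δ), v x < v xb) :=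
  stmt14_general a b v p n hsing hderiv
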